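/- arXiv:math/0512027 — 2 statements merged into one kernel-verified Lean document; each statement's English description precedes it below -/
import Mathlib

section
/- Let d ≥ 1. For every (s_1,…,s_d) ∈ ℂ^d in the region (R), the multiple zeta function Z_d(F_q[T]; s_1,…,s_d) is nonzero. -/
/-!
Group the tuples `(f_1, …, f_d)` by their degree vector `n`, a monotone `n : Fin d → ℕ`. There
are `q ^ n_k` monic polynomials of degree `n_k`, so `Z_d = ∑_n ∏_k b_k ^ n_k` with
`b_k = q ^ (1 - s_k)`. Writing `n` as the partial sums of free increments `m : Fin d → ℕ` turns
this into the product of geometric series `∏_j ∑_{m_j} z_j ^ m_j`, where `z_j = ∏_{k ≥ j} b_k`.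
On (R) every `‖z_j‖ < 1`, so the series converges absolutely to `∏_j (1 - z_j)⁻¹ ≠ 0`.
-/

open Polynomial Finset

namespace Polynomial

variable (R : Type*) [Semiring R] [Nontrivial R] [Fintype R]

noncomputable instance fintypeMonicNatDegreeEq (n : ℕ) :
    Fintype {p : R[X] // p.Monic ∧ p.natDegree = n} :=
  Fintype.ofEquiv _ ((monicEquivDegreeLT n).trans (degreeLTEquiv R n).toEquiv).symm

theorem card_monic_natDegree_eq (n : ℕ) :
    Fintype.card {p : R[X] // p.Monic ∧ p.natDegree = n} = Fintype.card R ^ n := by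
  rw [Fintype.card_congr ((monicEquivDegreeLT n).trans (degreeLTEquiv R n).toEquiv)]
  simp

end Polynomial

theorem Fin.prod_pow_consEquiv {M : Type*} [CommMonoid M] {n : ℕ} (z : Fin (n + 1) → M)
    (p : ℕ × (Fin n → ℕ)) :
    ∏ j, z j ^ Fin.consEquiv (fun _ => ℕ) p j = z 0 ^ p.1 * ∏ j, z j.succ ^ p.2 j := by
  simp [Fin.consEquiv, Fin.prod_univ_succ]

theorem summable_prod_pow_of_lt_one {n : ℕ} {r : Fin n → ℝ} (h0 : ∀ j, 0 ≤ r j)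
    (h1 : ∀ j, r j < 1) : Summable fun m : Fin n → ℕ => ∏ j, r j ^ m j := by
  induction n with
  | zero => exact Summable.of_finite
  | succ n ih =>
    have h := (summable_geometric_of_lt_one (h0 0) (h1 0)).mul_of_nonneg
      (ih (fun j => h0 j.succ) fun j => h1 j.succ) (fun k => pow_nonneg (h0 0) k)
      fun _ => prod_nonneg fun j _ => pow_nonneg (h0 _) _
    exact (Fin.consEquiv fun _ => ℕ).summable_iff.mp
      (h.congr fun p => (Fin.prod_pow_consEquiv r p).symm)

theorem hasSum_prod_pow_of_norm_lt_one {K : Type*} [NormedField K] [CompleteSpace K] {n : ℕ}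
    {z : Fin n → K} (hz : ∀ j, ‖z j‖ < 1) :
    HasSum (fun m : Fin n → ℕ => ∏ j, z j ^ m j) (∏ j, (1 - z j)⁻¹) := by
  induction n with
  | zero => simp
  | succ n ih =>
    have hnorm : Summable fun m : Fin n → ℕ => ‖∏ j, z j.succ ^ m j‖ := by
      simpa only [norm_prod, norm_pow] using
        summable_prod_pow_of_lt_one (fun j => norm_nonneg (z j.succ)) fun j => hz j.succ
    have hmul := summable_mul_of_summable_norm (f := fun k : ℕ => z 0 ^ k)
      (g := fun m : Fin n → ℕ => ∏ j, z j.succ ^ m j)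
      (summable_norm_geometric_of_norm_lt_one (hz 0)) hnorm
    have h := (hasSum_geometric_of_norm_lt_one (hz 0)).mul (ih fun j => hz j.succ) hmul
    rw [Fin.prod_univ_succ]
    exact (Fin.consEquiv fun _ => ℕ).hasSum_iff.mp
      (h.congr_fun fun p => Fin.prod_pow_consEquiv z p)

theorem Fin.Iic_zero {n : ℕ} : Iic (0 : Fin (n + 1)) = {0} := by
  ext j
  simp

theorem Fin.Iio_succ_eq_Iic_castSucc {n : ℕ} (i : Fin n) : Iio i.succ = Iic i.castSucc := by
  ext j
  simp [Fin.le_castSucc_iff]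

theorem Fin.sum_Iic_succ {M : Type*} [AddCommMonoid M] {n : ℕ} (m : Fin (n + 1) → M)
    (i : Fin n) : ∑ j ∈ Iic i.succ, m j = ∑ j ∈ Iic i.castSucc, m j + m i.succ := by
  rw [← sum_Iio_add_eq_sum_Iic, Fin.Iio_succ_eq_Iic_castSucc]

theorem Fin.sum_Iic_cases_sub {n : ℕ} {a : Fin (n + 1) → ℕ} (ha : Monotone a) (k : Fin (n + 1)) :
    ∑ j ∈ Iic k, (Fin.cases (a 0) fun i => a i.succ - a i.castSucc : Fin (n + 1) → ℕ) j = a k := by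
  induction k using Fin.induction with
  | zero => simp [Fin.Iic_zero]
  | succ i ih =>
    rw [Fin.sum_Iic_succ, ih, Fin.cases_succ]
    have := ha (Fin.castSucc_le_succ i)
    omega

def Fin.partialSumsEquiv (n : ℕ) :
    (Fin (n + 1) → ℕ) ≃ {a : Fin (n + 1) → ℕ // Monotone a} where
  toFun m := ⟨fun k => ∑ j ∈ Iic k, m j, fun _ _ h => sum_le_sum_of_subset (Iic_subset_Iic.mpr h)⟩
  invFun a := Fin.cases (a.1 0) fun i => a.1 i.succ - a.1 i.castSucc
  left_inv m := by
    funext k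
    cases k using Fin.cases with
    | zero => simp [Fin.Iic_zero]
    | succ i => simp [Fin.sum_Iic_succ]
  right_inv a := Subtype.ext (funext (Fin.sum_Iic_cases_sub a.2))

theorem prod_pow_sum_Iic_eq_prod_prod_Ici_pow {ι M : Type*} [CommMonoid M] [Fintype ι]
    [Preorder ι] [LocallyFiniteOrderBot ι] [LocallyFiniteOrderTop ι] (b : ι → M) (m : ι → ℕ) :
    ∏ k, b k ^ (∑ j ∈ Iic k, m j) = ∏ j, (∏ k ∈ Ici j, b k) ^ m j :=
  calc ∏ k, b k ^ (∑ j ∈ Iic k, m j) = ∏ k, ∏ j ∈ Iic k, b k ^ m j := by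
        simp only [prod_pow_eq_pow_sum]
    _ = ∏ j, ∏ k ∈ Ici j, b k ^ m j := prod_comm' fun k j => by simp
    _ = ∏ j, (∏ k ∈ Ici j, b k) ^ m j := by simp only [prod_pow]

theorem hasSum_prod_pow_monotone {K : Type*} [NormedField K] [CompleteSpace K] {n : ℕ}
    {b : Fin (n + 1) → K} (hb : ∀ j, ‖∏ k ∈ Ici j, b k‖ < 1) :
    HasSum (fun a : {a : Fin (n + 1) → ℕ // Monotone a} => ∏ k, b k ^ a.1 k)
      (∏ j, (1 - ∏ k ∈ Ici j, b k)⁻¹) := by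
  refine (Fin.partialSumsEquiv n).hasSum_iff.mp ?_
  simpa only [Function.comp_def, Fin.partialSumsEquiv, Equiv.coe_fn_mk,
    prod_pow_sum_Iic_eq_prod_prod_Ici_pow] using hasSum_prod_pow_of_norm_lt_one hb

theorem hasSum_sigma_of_card_nsmul {ι E : Type*} [NormedAddCommGroup E] [CompleteSpace E]
    {β : ι → Type*} [∀ i, Fintype (β i)] {g : ι → E} {a : E}
    (hg : HasSum (fun i => Fintype.card (β i) • g i) a)
    (hn : Summable fun i => Fintype.card (β i) * ‖g i‖) :
    HasSum (fun x : Σ i, β i => g x.1) a := by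
  refine hg.sigma_of_hasSum (fun i => ?_) (Summable.of_norm ?_)
  · simpa using hasSum_fintype fun _ : β i => g i
  · exact (summable_sigma_of_nonneg fun _ => norm_nonneg _).mpr
      ⟨fun _ => Summable.of_finite, by simpa using hn⟩

noncomputable def sigmaMonotoneFiberEquiv {ι α : Type*} [Preorder ι] (P : α → Prop)
    (deg : α → ℕ) :
    (Σ a : {a : ι → ℕ // Monotone a}, ∀ k, {x : α // P x ∧ deg x = a.1 k}) ≃
      {f : ι → α // (∀ k, P (f k)) ∧ Monotone fun k => deg (f k)} :=
  Equiv.ofBijective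
    (fun x => ⟨fun k => (x.2 k).1, fun k => (x.2 k).2.1, fun i j hij => by
      simpa only [(x.2 _).2.2] using x.1.2 hij⟩)
    (by
      constructor
      · rintro ⟨⟨a, ha⟩, p⟩ ⟨⟨a', ha'⟩, p'⟩ h
        have hp : ∀ k, (p k).1 = (p' k).1 := fun k => congrFun (congrArg Subtype.val h) k
        obtain rfl : a = a' :=
          funext fun k => (p k).2.2.symm.trans ((congrArg deg (hp k)).trans (p' k).2.2)
        obtain rfl : p = p' := funext fun k => Subtype.ext (hp k)
        rfl
      · rintro ⟨f, hP, hf⟩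
        exact ⟨⟨⟨fun k => deg (f k), hf⟩, fun k => ⟨f k, hP k, rfl⟩⟩, rfl⟩)

theorem Complex.natCast_pow_mul_pow_cpow_neg {q : ℕ} (hq : q ≠ 0) (n : ℕ) (s : ℂ) :
    (q : ℂ) ^ n * ((q : ℂ) ^ n) ^ (-s) = ((q : ℂ) ^ (1 - s)) ^ n := by
  rw [← natCast_cpow_natCast_mul, cpow_nat_mul, ← mul_pow, sub_eq_add_neg,
    cpow_add _ _ (Nat.cast_ne_zero.mpr hq), cpow_one]

theorem norm_prod_Ici_cpow_one_sub_lt_one {q : ℕ} (hq : 1 < q) {n : ℕ} {s : Fin n → ℂ}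
    {j : Fin n} (hs : (n : ℝ) - j < (∑ k ∈ Ici j, s k).re) :
    ‖∏ k ∈ Ici j, (q : ℂ) ^ (1 - s k)‖ < 1 := by
  rw [norm_prod]
  simp_rw [Complex.norm_natCast_cpow_of_pos (Nat.zero_lt_of_lt hq)]
  rw [← Real.rpow_sum_of_pos (by positivity)]
  apply Real.rpow_lt_one_of_one_lt_of_neg (by exact_mod_cast hq)
  rw [Complex.re_sum] at hs
  simp only [Complex.sub_re, Complex.one_re, sum_sub_distrib, sum_const, Fin.card_Ici,
    nsmul_eq_mul, mul_one, Nat.cast_sub j.is_lt.le]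
  linarith

theorem hasSum_multipleZeta (R : Type*) [Semiring R] [Nontrivial R] [Fintype R] {d : ℕ}
    (s : Fin (d + 1) → ℂ) (hz : ∀ j, ‖∏ k ∈ Ici j, (Fintype.card R : ℂ) ^ (1 - s k)‖ < 1) :
    HasSum (fun f : {f : Fin (d + 1) → R[X] //
        (∀ k, (f k).Monic) ∧ Monotone fun k => (f k).natDegree} =>
      ∏ k, ((Fintype.card R : ℂ) ^ (f.1 k).natDegree) ^ (-s k))
      (∏ j, (1 - ∏ k ∈ Ici j, (Fintype.card R : ℂ) ^ (1 - s k))⁻¹) := by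
  set q := Fintype.card R
  have hfiber (a : {a : Fin (d + 1) → ℕ // Monotone a}) :
      Fintype.card (∀ k, {p : R[X] // p.Monic ∧ p.natDegree = a.1 k}) •
        ∏ k, ((q : ℂ) ^ a.1 k) ^ (-s k) = ∏ k, ((q : ℂ) ^ (1 - s k)) ^ a.1 k := by
    rw [Fintype.card_pi, nsmul_eq_mul]
    simp only [card_monic_natDegree_eq]
    push_cast
    rw [← prod_mul_distrib]
    exact prod_congr rfl fun k _ =>
      Complex.natCast_pow_mul_pow_cpow_neg Fintype.card_ne_zero _ _
  have hsum := hasSum_prod_pow_monotone hz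
  have hnorm := (hasSum_prod_pow_monotone (b := fun k => ‖(q : ℂ) ^ (1 - s k)‖)
    (by simpa [norm_prod] using hz)).summable
  have hsigma := hasSum_sigma_of_card_nsmul
    (β := fun a : {a : Fin (d + 1) → ℕ // Monotone a} =>
      ∀ k, {p : R[X] // p.Monic ∧ p.natDegree = a.1 k})
    (g := fun a => ∏ k, ((q : ℂ) ^ a.1 k) ^ (-s k)) (by simpa only [hfiber] using hsum)
    (hnorm.congr fun a => by
      rw [← Complex.norm_natCast, ← norm_mul, ← nsmul_eq_mul, hfiber]
      simp [norm_prod])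
  refine (sigmaMonotoneFiberEquiv Monic natDegree).hasSum_iff.mp (hsigma.congr_fun fun x => ?_)
  exact prod_congr rfl fun k _ => by rw [← (x.2 k).2.2]; rfl

/-- On the region (R), the multiple zeta function
`Z_d(F_q[T]; s_1,…,s_d)` is nonzero. -/
theorem multiple_zeta_FqT_ne_zero
    (F : Type*) [Field F] [Fintype F] (d : ℕ) (hd : 1 ≤ d)
    (s : Fin d → ℂ)
    (hs : ∀ k : Fin d, (d : ℝ) - (k.val : ℝ) < (∑ j ∈ Finset.Ici k, s j).re) :
    (∑' f : {f : Fin d → Polynomial F //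
        (∀ k, (f k).Monic) ∧ Monotone fun k => (f k).natDegree},
      ∏ k : Fin d, ((Fintype.card F : ℂ) ^ (f.1 k).natDegree : ℂ) ^ (-(s k))) ≠ 0 := by
  obtain ⟨d, rfl⟩ : ∃ d', d = d' + 1 := ⟨d - 1, by omega⟩
  have hz j := norm_prod_Ici_cpow_one_sub_lt_one (Fintype.one_lt_card (α := F)) (hs j)
  rw [(hasSum_multipleZeta F s hz).tsum_eq]
  exact prod_ne_zero_iff.mpr fun j _ => inv_ne_zero <| sub_ne_zero.mpr fun h => by
    simpa [← h] using hz j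
end

section
/- Let q ≥ 2, g ≥ 1 and h ≥ 1 be integers and let (b_n)_{n≥0} be a sequence of natural numbers with b_n = h(q^{n−g+1} − 1)/(q − 1) for every n > 2g − 2. Then there exists a polynomial P(X, Y) with rational coefficients, of degree at most 2g + 1 in X and at most (1 + 2 + ⋯ + 2g) + 2g − 2 in Y, such that for every (s, w) ∈ ℂ² with Re(s + w) > 2 and Re(w) > 1, setting u = q^{−(s+w)} and v = q^{−w}, one has Σ_{0 ≤ n ≤ m} b_n b_m q^{−ns} q^{−mw} = P(u, v)/Q(u, v), where Q(u, v) = (1−u)(1−qu)(1−q²u)(1−v)(1−qv)·∏_{n=0}^{2g−2} v^n (which is nonzero on this region). -/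
/-!
With `u = q^{-(s+w)}`, `v = q^{-w}` and `m = n + k`, the double zeta function is the power series
`∑ b_n b_{n+k} u^n v^k`. Since `b_m = A q^m + B` for `m ≥ N = 2g - 1`, every row `n < N` is a
polynomial in `v` plus `v^{N-n}` times the geometric tail `A q^N/(1 - qv) + B/(1 - v)`, and the
rows `n ≥ N` add up to a combination of the `1/((1 - q^i u)(1 - q^j v))`. Clearing the five
denominators leaves a polynomial of degree `≤ N + 2` in `u` and `≤ N + 1` in `v`.
-/

open Finset

def doubleSeriesDenominator {S : Type*} [CommRing S] (r u v : S) : S :=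
  (1 - u) * (1 - r * u) * (1 - r ^ 2 * u) * (1 - v) * (1 - r * v)

/-- `doubleSeriesDenominator r u v` times the closed form of `∑ a n * a (n + k) * u ^ n * v ^ k`
found in `tsum_eq_of_eventually_affine`, for `a m = A * r ^ m + B` when `m ≥ N`. -/
def doubleSeriesNumerator {S : Type*} [CommRing S] (a : ℕ → S) (r A B : S) (N : ℕ) (u v : S) :
    S :=
  (1 - u) * (1 - r * u) * (1 - r ^ 2 * u) *
      ((1 - v) * (1 - r * v) *
          ∑ n ∈ range N, ∑ k ∈ range (N - n), a n * a (n + k) * u ^ n * v ^ k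
        + (∑ n ∈ range N, a n * u ^ n * v ^ (N - n)) * (A * r ^ N * (1 - v) + B * (1 - r * v)))
    + u ^ N * (A ^ 2 * r ^ (2 * N) * (1 - u) * (1 - r * u) * (1 - v)
      + A * B * r ^ N * (1 - u) * (1 - r ^ 2 * u) * ((1 - v) + (1 - r * v))
      + B ^ 2 * (1 - r * u) * (1 - r ^ 2 * u) * (1 - r * v))

theorem map_doubleSeriesNumerator {S T F : Type*} [CommRing S] [CommRing T] [FunLike F S T]
    [RingHomClass F S T] (f : F) (a : ℕ → S) (r A B : S) (N : ℕ) (u v : S) :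
    f (doubleSeriesNumerator a r A B N u v) =
      doubleSeriesNumerator (fun n => f (a n)) (f r) (f A) (f B) N (f u) (f v) := by
  simp [doubleSeriesNumerator, map_sum]

section Degree

variable {S : Type*} [CommRing S]

open Polynomial in
theorem natDegree_doubleSeriesNumerator_X_C_le (a : ℕ → S) (r A B c : S) (N : ℕ) :
    natDegree (doubleSeriesNumerator (fun n => C (a n)) (C r) (C A) (C B) N X (C c)) ≤ N + 2 := by
  have h1 : natDegree (∑ n ∈ range N, ∑ k ∈ range (N - n),
      C (a n) * C (a (n + k)) * X ^ n * C c ^ k) ≤ N - 1 :=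
    natDegree_sum_le_of_forall_le _ _ fun n hn => natDegree_sum_le_of_forall_le _ _ fun k _ => by
      have := mem_range.1 hn
      compute_degree
      omega
  have h2 : natDegree (∑ n ∈ range N, C (a n) * X ^ n * C c ^ (N - n)) ≤ N - 1 :=
    natDegree_sum_le_of_forall_le _ _ fun n hn => by
      have := mem_range.1 hn
      compute_degree
      omega
  -- For `N = 0` the bound only holds once the empty sums have removed the cubic factor in `X`.
  rcases Nat.eq_zero_or_pos N with rfl | hN
  · simp only [doubleSeriesNumerator, range_zero, sum_empty, mul_zero, zero_mul, add_zero,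
      zero_add]
    compute_degree
  · unfold doubleSeriesNumerator
    compute_degree
    omega

open Polynomial in
theorem natDegree_doubleSeriesNumerator_C_X_le (a : ℕ → S) (r A B c : S) (N : ℕ) :
    natDegree (doubleSeriesNumerator (fun n => C (a n)) (C r) (C A) (C B) N (C c) X) ≤ N + 1 := by
  have h1 : natDegree (∑ n ∈ range N, ∑ k ∈ range (N - n),
      C (a n) * C (a (n + k)) * C c ^ n * X ^ k) ≤ N - 1 :=
    natDegree_sum_le_of_forall_le _ _ fun _ _ => natDegree_sum_le_of_forall_le _ _ fun k hk => by
      have := mem_range.1 hk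
      compute_degree
      omega
  have h2 : natDegree (∑ n ∈ range N, C (a n) * C c ^ n * X ^ (N - n)) ≤ N :=
    natDegree_sum_le_of_forall_le _ _ fun n _ => by
      compute_degree
      omega
  rcases Nat.eq_zero_or_pos N with rfl | hN
  · simp only [doubleSeriesNumerator, range_zero, sum_empty, mul_zero, zero_mul, add_zero,
      zero_add]
    compute_degree
  · unfold doubleSeriesNumerator
    compute_degree
    omega

open MvPolynomial

theorem MvPolynomial.finSuccEquiv_C (r : S) (n : ℕ) : finSuccEquiv S n (C r) = Polynomial.C (C r) :=
  (finSuccEquiv S n).commutes r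

theorem degreeOf_zero_doubleSeriesNumerator_le (a : ℕ → S) (r A B : S) (N : ℕ) :
    degreeOf 0 (doubleSeriesNumerator (fun n => C (a n)) (C r) (C A) (C B) N (X 0) (X 1) :
      MvPolynomial (Fin 2) S) ≤ N + 2 := by
  rw [← natDegree_finSuccEquiv, map_doubleSeriesNumerator]
  simp only [finSuccEquiv_C, finSuccEquiv_X_zero]
  rw [show (1 : Fin 2) = Fin.succ 0 from rfl, finSuccEquiv_X_succ]
  exact natDegree_doubleSeriesNumerator_X_C_le _ _ _ _ (X 0) N

theorem degreeOf_one_doubleSeriesNumerator_le (a : ℕ → S) (r A B : S) (N : ℕ) :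
    degreeOf 1 (doubleSeriesNumerator (fun n => C (a n)) (C r) (C A) (C B) N (X 0) (X 1) :
      MvPolynomial (Fin 2) S) ≤ N + 1 := by
  rw [← Equiv.swap_apply_left (0 : Fin 2) 1, ← degreeOf_rename_of_injective (Equiv.injective _),
    map_doubleSeriesNumerator, Equiv.swap_apply_left, ← natDegree_finSuccEquiv,
    map_doubleSeriesNumerator]
  simp only [rename_C, rename_X, Equiv.swap_apply_left, Equiv.swap_apply_right, finSuccEquiv_C,
    finSuccEquiv_X_zero]
  rw [show (1 : Fin 2) = Fin.succ 0 from rfl, finSuccEquiv_X_succ]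
  exact natDegree_doubleSeriesNumerator_C_X_le _ _ _ _ (X 0) N

end Degree

section Analytic

variable {𝕜 : Type*} [NormedField 𝕜] {a : ℕ → 𝕜} {r A B u v : 𝕜} {N : ℕ}

theorem one_sub_ne_zero_of_norm_lt_one {x : 𝕜} (hx : ‖x‖ < 1) : 1 - x ≠ 0 :=
  sub_ne_zero.2 fun h => by simp [← h] at hx

theorem norm_lt_one_of_norm_mul_lt_one (hr : 1 ≤ ‖r‖) {x : 𝕜} (hx : ‖r * x‖ < 1) : ‖x‖ < 1 :=
  lt_of_le_of_lt (by rw [norm_mul]; exact le_mul_of_one_le_left (norm_nonneg _) hr) hx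

theorem exists_norm_le_mul_pow (hr : 1 ≤ ‖r‖) (ha : ∀ m, N ≤ m → a m = A * r ^ m + B) :
    ∃ K, ∀ m, ‖a m‖ ≤ K * ‖r‖ ^ m := by
  refine ⟨∑ m ∈ range N, ‖a m‖ + (‖A‖ + ‖B‖), fun m => ?_⟩
  have hpow : 1 ≤ ‖r‖ ^ m := one_le_pow₀ hr
  rcases lt_or_ge m N with hm | hm
  · have := single_le_sum (fun i _ => norm_nonneg (a i)) (mem_range.2 hm)
    calc ‖a m‖ ≤ ∑ m ∈ range N, ‖a m‖ + (‖A‖ + ‖B‖) := by linarith [norm_nonneg A, norm_nonneg B]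
      _ ≤ _ := le_mul_of_one_le_right (by positivity) hpow
  · calc ‖a m‖ ≤ ‖A‖ * ‖r‖ ^ m + ‖B‖ := by
          rw [ha m hm]; exact (norm_add_le (A * r ^ m) B).trans_eq (by rw [norm_mul, norm_pow])
      _ ≤ (‖A‖ + ‖B‖) * ‖r‖ ^ m := by nlinarith [norm_nonneg B]
      _ ≤ _ := mul_le_mul_of_nonneg_right
          (le_add_of_nonneg_left (sum_nonneg fun i _ => norm_nonneg (a i))) (by positivity)

theorem summable_mul_mul_pow_mul_pow [CompleteSpace 𝕜] {K ρ : ℝ} (hρ : 0 ≤ ρ)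
    (ha : ∀ m, ‖a m‖ ≤ K * ρ ^ m) (hu : ρ ^ 2 * ‖u‖ < 1) (hv : ρ * ‖v‖ < 1) :
    Summable fun p : ℕ × ℕ => a p.1 * a (p.1 + p.2) * u ^ p.1 * v ^ p.2 := by
  have hgeo := (summable_geometric_of_lt_one (by positivity) hu).mul_of_nonneg
    (summable_geometric_of_lt_one (by positivity) hv) (fun _ => by positivity)
    (fun _ => by positivity)
  refine Summable.of_norm_bounded (hgeo.mul_left (K ^ 2)) fun ⟨n, k⟩ => ?_
  calc ‖a n * a (n + k) * u ^ n * v ^ k‖ = ‖a n‖ * ‖a (n + k)‖ * ‖u‖ ^ n * ‖v‖ ^ k := by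
        simp only [norm_mul, norm_pow]
    _ ≤ (K * ρ ^ n) * (K * ρ ^ (n + k)) * ‖u‖ ^ n * ‖v‖ ^ k := by
        gcongr
        · exact (norm_nonneg _).trans (ha n)
        · exact ha n
        · exact ha _
    _ = K ^ 2 * ((ρ ^ 2 * ‖u‖) ^ n * (ρ * ‖v‖) ^ k) := by ring

theorem hasSum_shift_mul_pow (ha : ∀ m, N ≤ m → a m = A * r ^ m + B) (hrv : ‖r * v‖ < 1)
    (hv : ‖v‖ < 1) {n : ℕ} (hn : N ≤ n) :
    HasSum (fun k => a (n + k) * v ^ k) (A * r ^ n * (1 - r * v)⁻¹ + B * (1 - v)⁻¹) :=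
  (((hasSum_geometric_of_norm_lt_one hrv).mul_left (A * r ^ n)).add
    ((hasSum_geometric_of_norm_lt_one hv).mul_left B)).congr_fun fun k => by
      rw [ha _ (by omega)]
      ring

theorem hasSum_shift_mul_pow_of_le (ha : ∀ m, N ≤ m → a m = A * r ^ m + B) (hrv : ‖r * v‖ < 1)
    (hv : ‖v‖ < 1) {n : ℕ} (hn : n ≤ N) :
    HasSum (fun k => a (n + k) * v ^ k) (∑ k ∈ range (N - n), a (n + k) * v ^ k +
      v ^ (N - n) * (A * r ^ N * (1 - r * v)⁻¹ + B * (1 - v)⁻¹)) := by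
  rw [← hasSum_nat_add_iff' (N - n), add_sub_cancel_left]
  exact ((hasSum_shift_mul_pow ha hrv hv le_rfl).mul_left (v ^ (N - n))).congr_fun fun k => by
    rw [show n + (k + (N - n)) = N + k by omega, pow_add]
    ring

theorem hasSum_tail_rows (ha : ∀ m, N ≤ m → a m = A * r ^ m + B) (hu : ‖u‖ < 1)
    (hru : ‖r * u‖ < 1) (hr2u : ‖r ^ 2 * u‖ < 1) :
    HasSum (fun j => a (j + N) * u ^ (j + N) * (A * r ^ (j + N) * (1 - r * v)⁻¹ + B * (1 - v)⁻¹))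
      (u ^ N * A ^ 2 * r ^ (2 * N) * (1 - r * v)⁻¹ * (1 - r ^ 2 * u)⁻¹
        + u ^ N * A * B * r ^ N * ((1 - v)⁻¹ + (1 - r * v)⁻¹) * (1 - r * u)⁻¹
        + u ^ N * B ^ 2 * (1 - v)⁻¹ * (1 - u)⁻¹) :=
  ((((hasSum_geometric_of_norm_lt_one hr2u).mul_left
      (u ^ N * A ^ 2 * r ^ (2 * N) * (1 - r * v)⁻¹)).add
    ((hasSum_geometric_of_norm_lt_one hru).mul_left
      (u ^ N * A * B * r ^ N * ((1 - v)⁻¹ + (1 - r * v)⁻¹)))).add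
    ((hasSum_geometric_of_norm_lt_one hu).mul_left (u ^ N * B ^ 2 * (1 - v)⁻¹))).congr_fun
      fun j => by
        rw [ha _ (by omega)]
        ring

theorem tsum_eq_of_eventually_affine [CompleteSpace 𝕜] (hr : 1 ≤ ‖r‖)
    (ha : ∀ m, N ≤ m → a m = A * r ^ m + B) (hu : ‖r ^ 2 * u‖ < 1) (hv : ‖r * v‖ < 1) :
    ∑' p : ℕ × ℕ, a p.1 * a (p.1 + p.2) * u ^ p.1 * v ^ p.2 =
      ∑ n ∈ range N, a n * u ^ n * (∑ k ∈ range (N - n), a (n + k) * v ^ k +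
          v ^ (N - n) * (A * r ^ N * (1 - r * v)⁻¹ + B * (1 - v)⁻¹))
        + (u ^ N * A ^ 2 * r ^ (2 * N) * (1 - r * v)⁻¹ * (1 - r ^ 2 * u)⁻¹
          + u ^ N * A * B * r ^ N * ((1 - v)⁻¹ + (1 - r * v)⁻¹) * (1 - r * u)⁻¹
          + u ^ N * B ^ 2 * (1 - v)⁻¹ * (1 - u)⁻¹) := by
  have hru : ‖r * u‖ < 1 := norm_lt_one_of_norm_mul_lt_one hr (by rwa [← mul_assoc, ← sq])
  obtain ⟨K, hK⟩ := exists_norm_le_mul_pow hr ha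
  have hf := summable_mul_mul_pow_mul_pow (u := u) (v := v) (norm_nonneg r) hK
    (by rwa [← norm_pow, ← norm_mul]) (by rwa [← norm_mul])
  have hrow : ∀ n, ∑' k, a n * a (n + k) * u ^ n * v ^ k
      = a n * u ^ n * ∑' k, a (n + k) * v ^ k := fun n => by
    rw [← tsum_mul_left]
    exact tsum_congr fun k => by ring
  have hrows := hf.prod
  simp only [hrow] at hrows
  rw [hf.tsum_prod]
  simp only [hrow]
  rw [← hrows.sum_add_tsum_nat_add N]
  have hv0 := norm_lt_one_of_norm_mul_lt_one hr hv
  congr 1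
  · refine sum_congr rfl fun n hn => ?_
    rw [(hasSum_shift_mul_pow_of_le ha hv hv0 (mem_range.1 hn).le).tsum_eq]
  · rw [← (hasSum_tail_rows ha (norm_lt_one_of_norm_mul_lt_one hr hru) hru hu).tsum_eq]
    exact tsum_congr fun j => by
      rw [(hasSum_shift_mul_pow ha hv hv0 (Nat.le_add_left N j)).tsum_eq]

end Analytic

theorem doubleSeriesDenominator_ne_zero {𝕜 : Type*} [NormedField 𝕜] {r u v : 𝕜} (hr : 1 ≤ ‖r‖)
    (hu : ‖r ^ 2 * u‖ < 1) (hv : ‖r * v‖ < 1) : doubleSeriesDenominator r u v ≠ 0 := by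
  have hru : ‖r * u‖ < 1 := norm_lt_one_of_norm_mul_lt_one hr (by rwa [← mul_assoc, ← sq])
  refine mul_ne_zero (mul_ne_zero (mul_ne_zero (mul_ne_zero ?_ ?_) ?_) ?_) ?_ <;>
    refine one_sub_ne_zero_of_norm_lt_one ?_
  exacts [norm_lt_one_of_norm_mul_lt_one hr hru, hru, hu, norm_lt_one_of_norm_mul_lt_one hr hv, hv]

theorem tsum_eq_doubleSeriesNumerator_div {𝕜 : Type*} [NormedField 𝕜] [CompleteSpace 𝕜]
    {a : ℕ → 𝕜} {r A B u v : 𝕜} {N : ℕ} (hr : 1 ≤ ‖r‖)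
    (ha : ∀ m, N ≤ m → a m = A * r ^ m + B) (hu : ‖r ^ 2 * u‖ < 1) (hv : ‖r * v‖ < 1) :
    ∑' p : ℕ × ℕ, a p.1 * a (p.1 + p.2) * u ^ p.1 * v ^ p.2 =
      doubleSeriesNumerator a r A B N u v /
        doubleSeriesDenominator r u v := by
  have hQ := doubleSeriesDenominator_ne_zero hr hu hv
  simp only [doubleSeriesDenominator, mul_ne_zero_iff] at hQ
  obtain ⟨⟨⟨⟨h1, h2⟩, h3⟩, h4⟩, h5⟩ := hQ
  have hrows : ∀ T : 𝕜, ∑ n ∈ range N, a n * u ^ n *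
      (∑ k ∈ range (N - n), a (n + k) * v ^ k + v ^ (N - n) * T) =
      ∑ n ∈ range N, ∑ k ∈ range (N - n), a n * a (n + k) * u ^ n * v ^ k
        + (∑ n ∈ range N, a n * u ^ n * v ^ (N - n)) * T := fun T => by
    rw [sum_mul, ← sum_add_distrib]
    refine sum_congr rfl fun n _ => ?_
    rw [mul_add, mul_sum]
    congr 1
    · exact sum_congr rfl fun k _ => by ring
    · ring
  rw [tsum_eq_of_eventually_affine hr ha hu hv, hrows, doubleSeriesNumerator,
    doubleSeriesDenominator]
  generalize ∑ n ∈ range N, ∑ k ∈ range (N - n), a n * a (n + k) * u ^ n * v ^ k = S₁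
  generalize ∑ n ∈ range N, a n * u ^ n * v ^ (N - n) = S₂
  field_simp
  ring

theorem natCast_eq_mul_pow_add_of_mul_sub_one_eq {q g h m x : ℕ} (hq : 2 ≤ q) (hgm : g ≤ m)
    (hx : x * (q - 1) = h * (q ^ (m - g + 1) - 1)) :
    (x : ℚ) = h * q / ((q - 1) * q ^ g) * q ^ m + -(h / (q - 1)) := by
  have hq1 : (q : ℚ) - 1 ≠ 0 := by
    rw [sub_ne_zero]; exact_mod_cast (by omega : q ≠ 1)
  have hqg : (q : ℚ) ^ g ≠ 0 := pow_ne_zero _ (by exact_mod_cast (by omega : q ≠ 0))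
  have hpow : (q : ℚ) ^ (m - g + 1) * q ^ g = q ^ m * q := by
    rw [← pow_add, ← pow_succ, show m - g + 1 + g = m + 1 by omega]
  have hxq : (x : ℚ) * (q - 1) = h * (q ^ (m - g + 1) - 1) := by
    have := congrArg (Nat.cast : ℕ → ℚ) hx
    push_cast [Nat.cast_sub (by omega : 1 ≤ q),
      Nat.cast_sub (Nat.one_le_pow (m - g + 1) q (by omega))] at this
    exact this
  field_simp
  linear_combination (q : ℚ) ^ g * hxq + h * hpow

theorem norm_natCast_pow_mul_cpow_neg_lt_one {q k : ℕ} (hq : 1 < q) {z : ℂ} (hz : k < z.re) :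
    ‖(q : ℂ) ^ k * (q : ℂ) ^ (-z)‖ < 1 := by
  have hq0 : (0 : ℝ) < q := by positivity
  rw [norm_mul, norm_pow, Complex.norm_natCast, Complex.norm_natCast_cpow_of_pos (by omega),
    Complex.neg_re, ← Real.rpow_natCast, ← Real.rpow_add hq0]
  exact Real.rpow_lt_one_of_one_lt_of_neg (by exact_mod_cast hq) (by linarith)

def pairsLeEquiv : ℕ × ℕ ≃ {p : ℕ × ℕ // p.1 ≤ p.2} where
  toFun p := ⟨(p.1, p.1 + p.2), Nat.le_add_right _ _⟩
  invFun p := (p.1.1, p.1.2 - p.1.1)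
  left_inv p := by simp
  right_inv p := by
    obtain ⟨⟨m, n⟩, h⟩ := p
    simpa using Nat.add_sub_cancel' h

theorem tsum_le_pairs_cpow_eq_tsum_pow {x : ℂ} (hx : x ≠ 0) (a : ℕ → ℂ) (s w : ℂ) :
    ∑' p : {p : ℕ × ℕ // p.1 ≤ p.2},
        a p.1.1 * a p.1.2 * x ^ (-(p.1.1 : ℂ) * s) * x ^ (-(p.1.2 : ℂ) * w) =
      ∑' p : ℕ × ℕ, a p.1 * a (p.1 + p.2) * (x ^ (-(s + w))) ^ p.1 * (x ^ (-w)) ^ p.2 := by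
  rw [← pairsLeEquiv.tsum_eq]
  refine tsum_congr fun ⟨n, k⟩ => ?_
  simp only [pairsLeEquiv, Equiv.coe_fn_mk, ← Complex.cpow_nat_mul, mul_assoc,
    ← Complex.cpow_add _ _ hx]
  push_cast
  ring_nf

theorem double_zeta_genus_ge_one_rationality_general
    (q g h : ℕ) (hq : 2 ≤ q) (hg : 1 ≤ g)
    (b : ℕ → ℕ)
    (hb : ∀ n : ℕ, 2 * g - 2 < n → b n * (q - 1) = h * (q ^ (n - g + 1) - 1)) :
    ∃ P : MvPolynomial (Fin 2) ℚ,
      MvPolynomial.degreeOf 0 P ≤ 2 * g + 1 ∧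
      MvPolynomial.degreeOf 1 P ≤ (∑ i ∈ Finset.range (2 * g + 1), i) + 2 * g - 2 ∧
      ∀ s w : ℂ, 2 < (s + w).re → 1 < w.re →
        ∀ u v : ℂ, u = (q : ℂ) ^ (-(s + w)) → v = (q : ℂ) ^ (-w) →
          ((1 - u) * (1 - (q : ℂ) * u) * (1 - (q : ℂ) ^ 2 * u) * (1 - v) *
              (1 - (q : ℂ) * v) * ∏ n ∈ Finset.range (2 * g - 1), v ^ n) ≠ 0 ∧
          (∑' p : {p : ℕ × ℕ // p.1 ≤ p.2},
              (b p.1.1 : ℂ) * (b p.1.2 : ℂ) *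
                (q : ℂ) ^ (-(p.1.1 : ℂ) * s) * (q : ℂ) ^ (-(p.1.2 : ℂ) * w)) =
            MvPolynomial.aeval ![u, v] P /
              ((1 - u) * (1 - (q : ℂ) * u) * (1 - (q : ℂ) ^ 2 * u) * (1 - v) *
                (1 - (q : ℂ) * v) * ∏ n ∈ Finset.range (2 * g - 1), v ^ n) := by
  set N := 2 * g - 1
  obtain ⟨A, B, hb'⟩ : ∃ A B : ℚ, ∀ m, N ≤ m → (b m : ℚ) = A * q ^ m + B :=
    ⟨_, _, fun m hm => natCast_eq_mul_pow_add_of_mul_sub_one_eq hq (by omega) (hb m (by omega))⟩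
  open MvPolynomial in
  refine ⟨doubleSeriesNumerator (fun n => C (b n : ℚ)) (C (q : ℚ)) (C A) (C B) N (X 0) (X 1) *
    X 1 ^ ∑ n ∈ range N, n, ?_, ?_, ?_⟩
  · refine (MvPolynomial.degreeOf_mul_le _ _ _).trans ?_
    have := degreeOf_zero_doubleSeriesNumerator_le (fun n => (b n : ℚ)) q A B N
    rw [MvPolynomial.degreeOf_X_pow_of_ne _ (by decide : (0 : Fin 2) ≠ 1)]
    omega
  · refine (MvPolynomial.degreeOf_mul_le _ _ _).trans ?_
    have := degreeOf_one_doubleSeriesNumerator_le (fun n => (b n : ℚ)) q A B N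
    rw [MvPolynomial.degreeOf_X_self_pow, show 2 * g + 1 = N + 1 + 1 by omega, sum_range_succ,
      sum_range_succ]
    omega
  rintro s w hsw hw u v rfl rfl
  have hq0 : (q : ℂ) ≠ 0 := by exact_mod_cast (by omega : q ≠ 0)
  have hr : 1 ≤ ‖(q : ℂ)‖ := by simpa using (by omega : 1 ≤ q)
  have hu := norm_natCast_pow_mul_cpow_neg_lt_one (k := 2) hq (by exact_mod_cast hsw)
  have hv := norm_natCast_pow_mul_cpow_neg_lt_one (k := 1) hq (by exact_mod_cast hw)
  rw [pow_one] at hv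
  have hv0 : (q : ℂ) ^ (-w) ≠ 0 := (Complex.cpow_ne_zero_iff).2 (Or.inl hq0)
  rw [prod_pow_eq_pow_sum]
  refine ⟨mul_ne_zero (doubleSeriesDenominator_ne_zero hr hu hv) (pow_ne_zero _ hv0), ?_⟩
  simp only [map_mul, map_pow, map_doubleSeriesNumerator, MvPolynomial.aeval_C,
    MvPolynomial.aeval_X, eq_ratCast, Rat.cast_natCast, Matrix.cons_val_zero, Matrix.cons_val_one]
  rw [mul_div_mul_right _ _ (pow_ne_zero _ hv0),
    tsum_le_pairs_cpow_eq_tsum_pow hq0 fun n => (b n : ℂ)]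
  exact tsum_eq_doubleSeriesNumerator_div (a := fun n => (b n : ℂ)) (A := A) (B := B) hr
    (fun m hm => by exact_mod_cast congrArg (Rat.cast : ℚ → ℂ) (hb' m hm)) hu hv

/-- Let `q ≥ 2`, `g ≥ 1`, `h ≥ 1` and `(b_n)` naturals with
`b_n = h(q^{n−g+1}−1)/(q−1)` for `n > 2g − 2`. Then there is a polynomial
`P(X, Y)` over `ℚ`, of degree `≤ 2g + 1` in `X` and `≤ (1+2+⋯+2g) + 2g − 2`
in `Y`, such that for `Re(s+w) > 2`, `Re(w) > 1`, with `u = q^{−(s+w)}` and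
`v = q^{−w}`, one has `Z_2(K; s, w) = P(u,v)/Q(u,v)`, where
`Q(u,v) = (1−u)(1−qu)(1−q²u)(1−v)(1−qv)·∏_{n=0}^{2g−2} v^n` is nonzero on
this region. -/
theorem double_zeta_genus_ge_one_rationality
    (q g h : ℕ) (hq : 2 ≤ q) (hg : 1 ≤ g) (hh : 1 ≤ h)
    (b : ℕ → ℕ)
    (hb : ∀ n : ℕ, 2 * g - 2 < n → b n * (q - 1) = h * (q ^ (n - g + 1) - 1)) :
    ∃ P : MvPolynomial (Fin 2) ℚ,
      MvPolynomial.degreeOf 0 P ≤ 2 * g + 1 ∧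
      MvPolynomial.degreeOf 1 P ≤ (∑ i ∈ Finset.range (2 * g + 1), i) + 2 * g - 2 ∧
      ∀ s w : ℂ, 2 < (s + w).re → 1 < w.re →
        ∀ u v : ℂ, u = (q : ℂ) ^ (-(s + w)) → v = (q : ℂ) ^ (-w) →
          ((1 - u) * (1 - (q : ℂ) * u) * (1 - (q : ℂ) ^ 2 * u) * (1 - v) *
              (1 - (q : ℂ) * v) * ∏ n ∈ Finset.range (2 * g - 1), v ^ n) ≠ 0 ∧
          (∑' p : {p : ℕ × ℕ // p.1 ≤ p.2},
              (b p.1.1 : ℂ) * (b p.1.2 : ℂ) *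
                (q : ℂ) ^ (-(p.1.1 : ℂ) * s) * (q : ℂ) ^ (-(p.1.2 : ℂ) * w)) =
            MvPolynomial.aeval ![u, v] P /
              ((1 - u) * (1 - (q : ℂ) * u) * (1 - (q : ℂ) ^ 2 * u) * (1 - v) *
                (1 - (q : ℂ) * v) * ∏ n ∈ Finset.range (2 * g - 1), v ^ n) :=
  double_zeta_genus_ge_one_rationality_general q g h hq hg b hb
end
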